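/- arXiv:2401.12802 — 6 statements merged into one kernel-verified Lean document; each statement's English description precedes it below -/
import Mathlib

section
/- Let m and d be positive integers and let S ⊆ (ℤ/mℤ)^d be a non-empty non-mid-point reducible subset. Then there exist constants C > 0 and N (depending on m, d and S) such that for every integer n ≥ N there exists a subset A ⊆ (ℤ/mℤ)^n with |A| ≥ |S|^(n/d − C·log n) that contains no three-term arithmetic progression. -/
/-- A point `y ∈ S` is a non-mid-point of `S` if there is no solution to `2y = x + z`
with distinct `x, z ∈ S`. -/
def IsNonMidPoint {G : Type*} [AddCommGroup G] (S : Finset G) (y : G) : Prop :=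
  ¬ ∃ x ∈ S, ∃ z ∈ S, x ≠ z ∧ 2 • y = x + z

/-- A finite set `S` is non-mid-point reducible if every non-empty subset `S' ⊆ S`
contains a point `y ∈ S'` that is a non-mid-point of `S'`. -/
def NonMidPointReducible {G : Type*} [AddCommGroup G] (S : Finset G) : Prop :=
  ∀ S' ⊆ S, S'.Nonempty → ∃ y ∈ S', IsNonMidPoint S' y

/-!
Take words of length `k` over `S` in which every letter occurs equally often, and suppose
`2y = x + z` with `x ≠ z`. Off the set `B` of positions where `x` and `z` differ we have
`2xᵢ = 2yᵢ = 2zᵢ`, so on `B` the doubled letters of `x`, `y` and `z` form the same multiset.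
Hence every letter `s` of `x` or `z` on `B` satisfies `2s = 2yᵢ = xᵢ + zᵢ` for some `i ∈ B`,
and the set of these letters has no non-mid-point. By pigeonhole some letter-count class has at
least `|S|^k / (k + 1)^|S|` words, and embedding `((ℤ/mℤ)^d)^k` into `(ℤ/mℤ)^n` with
`k = ⌊n/d⌋` gives the bound `|S|^(n/d - C log n)`.
-/

open Finset Function

/-- Unlike Mathlib's `ThreeAPFree`, this does not force `x = y`: that would fail whenever
doubling is not injective. -/
def IsMidpointFree {G : Type*} [AddCommGroup G] (A : Finset G) : Prop :=
  ∀ x ∈ A, ∀ y ∈ A, ∀ z ∈ A, 2 • y = x + z → x = z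

theorem IsMidpointFree.image {G H : Type*} [AddCommGroup G] [AddCommGroup H] [DecidableEq H]
    {A : Finset G} (hA : IsMidpointFree A) {f : G →+ H} (hf : Injective f) :
    IsMidpointFree (A.image f) := by
  simp only [IsMidpointFree, forall_mem_image]
  intro x hx y hy z hz h
  rw [← map_nsmul, ← map_add] at h
  rw [hA x hx y hy z hz (hf h)]

theorem Multiset.map_filter_eq_of_map_eq {ι α : Type*} {s : Multiset ι} {f g : ι → α}
    (p : ι → Prop) [DecidablePred p] (h : s.map f = s.map g)
    (hfg : ∀ i ∈ s, ¬ p i → f i = g i) : (s.filter p).map f = (s.filter p).map g := by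
  have hrest : (s.filter (¬ p ·)).map f = (s.filter (¬ p ·)).map g :=
    Multiset.map_congr rfl fun i hi =>
      hfg i (Multiset.mem_of_mem_filter hi) (Multiset.mem_filter.1 hi).2
  rw [← Multiset.filter_add_not p s, Multiset.map_add, Multiset.map_add, hrest] at h
  exact add_right_cancel h

theorem NonMidPointReducible.eq_of_two_nsmul_eq_add {G ι : Type*} [AddCommGroup G]
    [DecidableEq G] [Fintype ι] {S : Finset G} (hS : NonMidPointReducible S) {x y z : ι → G}
    (hx : ∀ i, x i ∈ S) (hz : ∀ i, z i ∈ S) (hxy : univ.val.map x = univ.val.map y)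
    (hzy : univ.val.map z = univ.val.map y) (h : ∀ i, 2 • y i = x i + z i) : x = z := by
  classical
  by_contra hne
  set B := univ.filter fun i => x i ≠ z i
  have hdouble : ∀ w : ι → G, univ.val.map w = univ.val.map y →
      (∀ i, x i = z i → 2 • w i = 2 • y i) →
        B.val.map (2 • w ·) = B.val.map (2 • y ·) := by
    intro w hw hwy
    refine Multiset.map_filter_eq_of_map_eq _ ?_ fun i _ hi => hwy i (not_not.1 hi)
    simpa [Multiset.map_map] using congrArg (Multiset.map (2 • ·)) hw
  have hx2 := hdouble x hxy fun i hi => by rw [h i, hi, two_nsmul]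
  have hz2 := hdouble z hzy fun i hi => by rw [h i, hi, two_nsmul]
  have hBne : B.Nonempty := by
    obtain ⟨i, hi⟩ := ne_iff.1 hne
    exact ⟨i, mem_filter.2 ⟨mem_univ i, hi⟩⟩
  obtain ⟨s, hs, hsmid⟩ := hS (B.image x ∪ B.image z)
    (union_subset (image_subset_iff.2 fun i _ => hx i) (image_subset_iff.2 fun i _ => hz i))
    (hBne.image x |>.mono subset_union_left)
  have h2s : 2 • s ∈ B.val.map (2 • y ·) := by
    rcases mem_union.1 hs with hs | hs <;> obtain ⟨j, hj, rfl⟩ := mem_image.1 hs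
    · exact hx2 ▸ Multiset.mem_map_of_mem _ hj
    · exact hz2 ▸ Multiset.mem_map_of_mem _ hj
  obtain ⟨i, hiB, hi⟩ := Multiset.mem_map.1 h2s
  exact hsmid ⟨x i, mem_union_left _ (mem_image_of_mem x hiB),
    z i, mem_union_right _ (mem_image_of_mem z hiB), (mem_filter.1 hiB).2, hi ▸ h i⟩

theorem exists_subset_piFinset_map_eq_card_div_le {α ι : Type*} [DecidableEq α] [DecidableEq ι]
    [Fintype ι] (S : Finset α) : ∃ A ⊆ Fintype.piFinset fun _ : ι => S,
      (∀ w ∈ A, ∀ w' ∈ A, univ.val.map w = univ.val.map w') ∧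
      (#S : ℝ) ^ Fintype.card ι / (Fintype.card ι + 1) ^ #S ≤ #A := by
  let t := Fintype.piFinset fun _ : S => range (Fintype.card ι + 1)
  let f : (ι → α) → S → ℕ := fun w s => (univ.val.map w).count ↑s
  have hf : ∀ w ∈ Fintype.piFinset fun _ : ι => S, f w ∈ t := fun w _ =>
    Fintype.mem_piFinset.2 fun s => mem_range.2 <| Nat.lt_succ_of_le <|
      (Multiset.count_le_card _ _).trans (by simp)
  obtain ⟨c, -, hc⟩ := exists_le_card_fiber_of_nsmul_le_card_of_maps_to hf
    ⟨fun _ => 0, by simp [t]⟩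
    (b := (#S : ℝ) ^ Fintype.card ι / (Fintype.card ι + 1) ^ #S) (by
      have ht : (#t : ℝ) = (Fintype.card ι + 1) ^ #S := by simp [t]
      rw [nsmul_eq_mul, ht, mul_div_cancel₀ _ (by positivity)]
      simp)
  refine ⟨_, filter_subset _ _, fun w hw w' hw' => Multiset.ext.2 fun a => ?_, hc⟩
  by_cases ha : a ∈ S
  · exact congrFun ((mem_filter.1 hw).2.trans (mem_filter.1 hw').2.symm) (⟨a, ha⟩ : S)
  · have hletters : ∀ v ∈ Fintype.piFinset fun _ : ι => S, (univ.val.map v).count a = 0 :=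
      fun v hv => Multiset.count_eq_zero.2 fun hav => by
        obtain ⟨i, -, rfl⟩ := Multiset.mem_map.1 hav
        exact ha (Fintype.mem_piFinset.1 hv i)
    rw [hletters w (mem_filter.1 hw).1, hletters w' (mem_filter.1 hw').1]

theorem NonMidPointReducible.exists_isMidpointFree {R : Type*} [AddCommGroup R] {d : ℕ}
    {S : Finset (Fin d → R)} (hS : NonMidPointReducible S) (n : ℕ) :
    ∃ A : Finset (Fin n → R), IsMidpointFree A ∧
      (#S : ℝ) ^ (n / d) / ((n / d : ℕ) + 1 : ℝ) ^ #S ≤ #A := by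
  classical
  obtain ⟨A, hAS, hAmap, hA⟩ := exists_subset_piFinset_map_eq_card_div_le (ι := Fin (n / d)) S
  have hAfree : IsMidpointFree A := fun x hx y hy z hz h =>
    hS.eq_of_two_nsmul_eq_add (Fintype.mem_piFinset.1 (hAS hx))
      (Fintype.mem_piFinset.1 (hAS hz)) (hAmap x hx y hy) (hAmap z hz y hy) (congrFun h)
  -- flatten `(R^d)^(n/d)` into the first `(n/d) * d` coordinates of `R^n`
  let e : Fin (n / d) × Fin d → Fin n := Fin.castLE (Nat.div_mul_le_self n d) ∘ finProdFinEquiv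
  let F : (Fin (n / d) → Fin d → R) →+ (Fin n → R) :=
    (ExtendByZero.hom R e).comp (LinearEquiv.curry ℤ R (Fin (n / d)) (Fin d)).symm.toAddMonoidHom
  have hF : Injective F :=
    (extend_injective ((Fin.castLE_injective _).comp finProdFinEquiv.injective) _).comp
      (LinearEquiv.injective _)
  refine ⟨A.image F, hAfree.image hF, ?_⟩
  rw [card_image_of_injective _ hF]
  simpa using hA

theorem rpow_sub_mul_log_le_div {r x : ℝ} (hr : 1 < r) {M n k : ℕ} (hn : r * 2 ^ M ≤ n)
    (hkn : k ≤ n) (hxk : x < k + 1) :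
    r ^ (x - (M + 1) / Real.log r * Real.log n) ≤ r ^ k / (k + 1) ^ M := by
  have hr0 : 0 < r := by linarith
  have hn0 : (0 : ℝ) < n := lt_of_lt_of_le (by positivity) hn
  -- `C = (M + 1) / log r` is chosen so that `r ^ (C log n) = n ^ (M + 1)`
  have hpow : r ^ ((M + 1) / Real.log r * Real.log n) = (n : ℝ) ^ (M + 1) := by
    rw [div_mul_eq_mul_div, mul_div_assoc, ← Real.logb, mul_comm, Real.rpow_mul hr0.le,
      Real.rpow_logb hr0 hr.ne' hn0]
    exact_mod_cast Real.rpow_natCast (n : ℝ) (M + 1)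
  have hk : ((k : ℝ) + 1) ^ M ≤ 2 ^ M * (n : ℝ) ^ M := by
    rw [← mul_pow]
    gcongr
    have : (k : ℝ) ≤ n := by exact_mod_cast hkn
    have : (1 : ℝ) ≤ n :=
      (one_le_mul_of_one_le_of_one_le hr.le (one_le_pow₀ one_le_two)).trans hn
    linarith
  calc r ^ (x - (M + 1) / Real.log r * Real.log n)
      = r ^ x / (n : ℝ) ^ (M + 1) := by rw [Real.rpow_sub hr0, hpow]
    _ ≤ r ^ ((k : ℝ) + 1) / (n : ℝ) ^ (M + 1) := by
      gcongr
      exact hr.le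
    _ = r * r ^ k / ((n : ℝ) * (n : ℝ) ^ M) := by
      rw [Real.rpow_add_one hr0.ne', Real.rpow_natCast, pow_succ]
      ring
    _ ≤ r ^ k / (k + 1) ^ M := by
      rw [div_le_div_iff₀ (by positivity) (by positivity)]
      calc r * r ^ k * ((k : ℝ) + 1) ^ M ≤ r * r ^ k * (2 ^ M * (n : ℝ) ^ M) := by gcongr
        _ = r ^ k * ((r * 2 ^ M) * (n : ℝ) ^ M) := by ring
        _ ≤ r ^ k * ((n : ℝ) * (n : ℝ) ^ M) := by gcongr

theorem exists_rpow_sub_mul_log_le_div {r : ℝ} (hr : 1 < r) (M d : ℕ) :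
    ∃ C > 0, ∃ N : ℕ, ∀ n ≥ N,
      r ^ ((n : ℝ) / d - C * Real.log n) ≤ r ^ (n / d) / ((n / d : ℕ) + 1 : ℝ) ^ M := by
  refine ⟨(M + 1) / Real.log r, by have := Real.log_pos hr; positivity, ⌈r * 2 ^ M⌉₊,
    fun n hn => rpow_sub_mul_log_le_div hr (Nat.ceil_le.1 hn) (Nat.div_le_self n d) ?_⟩
  rw [← Nat.floor_div_eq_div (K := ℝ)]
  exact Nat.lt_floor_add_one _

theorem stmt3_general (m d : ℕ)
    (S : Finset (Fin d → ZMod m)) (hS : S.Nonempty) (hSred : NonMidPointReducible S) :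
    ∃ C : ℝ, C > 0 ∧ ∃ N : ℕ,
      ∀ n : ℕ, n ≥ N →
        ∃ A : Finset (Fin n → ZMod m),
          (A.card : ℝ) ≥ (S.card : ℝ) ^ ((n : ℝ) / d - C * Real.log n) ∧
          ¬ ∃ x ∈ A, ∃ y ∈ A, ∃ z ∈ A,
              x ≠ y ∧ x ≠ z ∧ y ≠ z ∧ x - 2 • y + z = 0 := by
  rcases (one_le_card.2 hS).eq_or_lt with hS1 | hS1
  · exact ⟨1, one_pos, 0, fun n _ => ⟨{0}, by simp [← hS1], by simp⟩⟩
  obtain ⟨C, hC, N, hN⟩ := exists_rpow_sub_mul_log_le_div (r := #S) (by exact_mod_cast hS1) #S d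
  refine ⟨C, hC, N, fun n hn => ?_⟩
  obtain ⟨A, hAfree, hA⟩ := hSred.exists_isMidpointFree n
  refine ⟨A, (hN n hn).trans hA, ?_⟩
  rintro ⟨x, hx, y, hy, z, hz, -, hxz, -, hAP⟩
  exact hxz (hAfree x hx y hy z hz (by rw [eq_comm, ← sub_eq_zero, ← hAP]; abel))

/-- Let m and d be positive integers and let S ⊆ (ℤ/mℤ)^d be a non-empty
non-mid-point reducible subset. Then there exist constants C > 0 and N such that for
every n ≥ N there exists a subset A ⊆ (ℤ/mℤ)^n with |A| ≥ |S|^(n/d − C·log n) containing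
no three-term arithmetic progression. -/
theorem stmt3 (m d : ℕ) (hm : 0 < m) (hd : 0 < d)
    (S : Finset (Fin d → ZMod m)) (hS : S.Nonempty) (hSred : NonMidPointReducible S) :
    ∃ C : ℝ, C > 0 ∧ ∃ N : ℕ,
      ∀ n : ℕ, n ≥ N →
        ∃ A : Finset (Fin n → ZMod m),
          (A.card : ℝ) ≥ (S.card : ℝ) ^ ((n : ℝ) / d - C * Real.log n) ∧
          ¬ ∃ x ∈ A, ∃ y ∈ A, ∃ z ∈ A,
              x ≠ y ∧ x ≠ z ∧ y ≠ z ∧ x - 2 • y + z = 0 :=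
  stmt3_general m d S hS hSred
end

section
/- For every non-empty finite subset S ⊆ T, there exists a point y ∈ S that is a non-mid-point of S (with respect to the mod 1 relation), i.e., there is no solution to 2y ≡ x + z (mod 1) with distinct x, z ∈ S. -/
/-- `u ≡ v (mod 1)`: each coordinate of `u - v` is an integer. -/
def Mod1Eq (u v : ℝ × ℝ) : Prop :=
  (∃ k : ℤ, u.1 - v.1 = k) ∧ (∃ k : ℤ, u.2 - v.2 = k)

/-- T₁ = {(a,b) ∈ [0,1/2) × [1/2,1) : 7/12 ≤ a+b ≤ 4/3} ∪ {(a,b) ∈ [0,1/2)² : a+b > 5/6}. -/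
def T1 : Set (ℝ × ℝ) :=
  {p | p.1 ∈ Set.Ico (0:ℝ) (1/2) ∧ p.2 ∈ Set.Ico (1/2:ℝ) 1 ∧
        7/12 ≤ p.1 + p.2 ∧ p.1 + p.2 ≤ 4/3} ∪
  {p | p.1 ∈ Set.Ico (0:ℝ) (1/2) ∧ p.2 ∈ Set.Ico (0:ℝ) (1/2) ∧ 5/6 < p.1 + p.2}

/-- T₂ = {(a,b) ∈ [1/2,1) × [0,1/2) : 7/12 ≤ a+b < 5/6 and 2a+b < 3/2}. -/
def T2 : Set (ℝ × ℝ) :=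
  {p | p.1 ∈ Set.Ico (1/2:ℝ) 1 ∧ p.2 ∈ Set.Ico (0:ℝ) (1/2) ∧
        7/12 ≤ p.1 + p.2 ∧ p.1 + p.2 < 5/6 ∧ 2 * p.1 + p.2 < 3/2}

/-- T = T₁ ∪ T₂. -/
def T : Set (ℝ × ℝ) := T1 ∪ T2


/-!
Choose `y ∈ S` minimising `a + b`, ties broken by the fractional part of `2a`. If
`2y ≡ x + z (mod 1)` with `x ≠ z`, the integer `k₁ + k₂ = 2 (a_y + b_y) - (a_x + b_x) - (a_z + b_z)`
lies in `(-2, 0]`, because `a + b` ranges over `[7/12, 4/3]` on `T`. If it is `-1`, the points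
`x, z` cannot lie in `T₂` (where `a + b < 5/6`), and then `y` lies in the square `[0, 1/2)²`,
where `a + b > 5/6` is too large. If it is `0`, the three points lie on one antidiagonal, and
comparing the fractional parts of `2a` forces `x = z`.
-/

open Int

lemma bounds_of_mem_T {p : ℝ × ℝ} (hp : p ∈ T) :
    0 ≤ p.1 ∧ p.1 < 1 ∧ 0 ≤ p.2 ∧ p.2 < 1 ∧ 7 / 12 ≤ p.1 + p.2 ∧ p.1 + p.2 ≤ 4 / 3 := by
  rcases hp with (⟨⟨_, _⟩, ⟨_, _⟩, _, _⟩ | ⟨⟨_, _⟩, ⟨_, _⟩, _⟩) | ⟨⟨_, _⟩, ⟨_, _⟩, _, _, _⟩ <;>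
    refine ⟨?_, ?_, ?_, ?_, ?_, ?_⟩ <;> linarith

lemma right_half_of_mem_T {p : ℝ × ℝ} (hp : p ∈ T) (h : 1 / 2 ≤ p.1) :
    p.2 < 1 / 2 ∧ p.1 + p.2 < 5 / 6 ∧ 2 * p.1 + p.2 < 3 / 2 := by
  rcases hp with (⟨⟨_, _⟩, -⟩ | ⟨⟨_, _⟩, -⟩) | ⟨-, ⟨_, _⟩, _, _, _⟩
  · linarith
  · linarith
  · exact ⟨by assumption, by assumption, by assumption⟩

lemma five_sixths_lt_of_mem_T {p : ℝ × ℝ} (hp : p ∈ T) (h₁ : p.1 < 1 / 2) (h₂ : p.2 < 1 / 2) :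
    5 / 6 < p.1 + p.2 := by
  rcases hp with (⟨-, ⟨_, _⟩, -⟩ | ⟨-, -, _⟩) | ⟨⟨_, _⟩, -⟩ <;> linarith

lemma fst_add_fst_lt_one_of_mem_T {x z : ℝ × ℝ} (hx : x ∈ T) (hz : z ∈ T) (hx₁ : x.1 < 1 / 2)
    (hz₁ : 1 / 2 ≤ z.1) (hs : x.1 + x.2 = z.1 + z.2) : x.1 + z.1 < 1 := by
  obtain ⟨-, hzs, hzl⟩ := right_half_of_mem_T hz hz₁
  by_cases hx₂ : x.2 < 1 / 2
  · linarith [five_sixths_lt_of_mem_T hx hx₁ hx₂]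
  · linarith

/-- `2 fract (2c) - fract (2a) - fract (2b)` is an integer in `(-2, 0]` with the parity of
`⌊2a⌋ + ⌊2b⌋`: it is `0` when `a, b` lie in the same half of `[0, 1)`, forcing `a = b`, and `-1`
otherwise, where it gives `2 fract (2c) = 2 (a + b) - 2 < 0` by `hsplit`. -/
lemma eq_of_fract_two_mul_le {a b c : ℝ} {k : ℤ} (ha : 0 ≤ a) (hab : a ≤ b) (hb : b < 1)
    (hk : 2 * c - (a + b) = k) (hca : fract (2 * c) ≤ fract (2 * a))
    (hcb : fract (2 * c) ≤ fract (2 * b)) (hsplit : a < 1 / 2 → 1 / 2 ≤ b → a + b < 1) :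
    a = b := by
  set m : ℤ := 2 * k - 2 * ⌊2 * c⌋ + ⌊2 * a⌋ + ⌊2 * b⌋ with hm_def
  have hm : (m : ℝ) = 2 * fract (2 * c) - fract (2 * a) - fract (2 * b) := by
    simp only [hm_def, ← Int.self_sub_floor]
    push_cast
    linarith
  have hm_lo : -2 < m := by
    have := fract_nonneg (2 * c); have := fract_lt_one (2 * a); have := fract_lt_one (2 * b)
    exact_mod_cast (by linarith : (-2 : ℝ) < m)
  have hm_hi : m ≤ 0 := by exact_mod_cast (by linarith : (m : ℝ) ≤ 0)
  have hfa := Int.floor_add_fract (2 * a)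
  have hfb := Int.floor_add_fract (2 * b)
  have ha₀ : 0 ≤ ⌊2 * a⌋ := Int.floor_nonneg.2 (by linarith)
  have hb₁ : ⌊2 * b⌋ < 2 := Int.floor_lt.2 (by push_cast; linarith)
  have hab' : ⌊2 * a⌋ ≤ ⌊2 * b⌋ := Int.floor_mono (by linarith)
  rcases (by omega : ⌊2 * a⌋ = ⌊2 * b⌋ ∨ ⌊2 * a⌋ = 0 ∧ ⌊2 * b⌋ = 1) with heq | ⟨ha0, hb1⟩
  · have hm0 : m = 0 := by omega
    rw [hm0] at hm
    rw [heq] at hfa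
    push_cast at hm
    linarith
  · have hm1 : m = -1 := by omega
    rw [hm1] at hm
    rw [ha0] at hfa
    rw [hb1] at hfb
    push_cast at hm hfa hfb
    have := hsplit (by linarith [fract_lt_one (2 * a)]) (by linarith [fract_nonneg (2 * b)])
    linarith [fract_nonneg (2 * c)]

lemma sum_ne_neg_one_of_mem_T {x y z : ℝ × ℝ} (hx : x ∈ T) (hy : y ∈ T) (hz : z ∈ T) {k₁ k₂ : ℤ}
    (h₁ : 2 * y.1 - (x.1 + z.1) = k₁) (h₂ : 2 * y.2 - (x.2 + z.2) = k₂) : k₁ + k₂ ≠ -1 := by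
  intro hk
  have hs : (2 * (y.1 + y.2) - (x.1 + x.2) - (z.1 + z.2)) = -1 := by
    have : ((k₁ + k₂ : ℤ) : ℝ) = -1 := by exact_mod_cast hk
    push_cast at this
    linarith
  obtain ⟨hx₀, hx₁, hx₂, hx₃, hxs, hxs'⟩ := bounds_of_mem_T hx
  obtain ⟨hy₀, hy₁, hy₂, hy₃, hys, -⟩ := bounds_of_mem_T hy
  obtain ⟨hz₀, hz₁, hz₂, hz₃, hzs, hzs'⟩ := bounds_of_mem_T hz
  have hxl : x.1 < 1 / 2 := by
    by_contra! h
    linarith [(right_half_of_mem_T hx h).2.1]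
  have hzl : z.1 < 1 / 2 := by
    by_contra! h
    linarith [(right_half_of_mem_T hz h).2.1]
  have hk₁ : k₁ = 0 := by
    have : -1 < k₁ := by exact_mod_cast (by linarith : (-1 : ℝ) < k₁)
    have : -2 < k₂ := by exact_mod_cast (by linarith : (-2 : ℝ) < k₂)
    omega
  have hk₂ : k₂ = -1 := by omega
  rw [hk₁] at h₁
  rw [hk₂] at h₂
  push_cast at h₁ h₂
  linarith [five_sixths_lt_of_mem_T hy (by linarith) (by linarith)]

noncomputable def sumFractKey (p : ℝ × ℝ) : ℝ ×ₗ ℝ := toLex (p.1 + p.2, fract (2 * p.1))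

lemma sumFractKey_le_iff {p q : ℝ × ℝ} :
    sumFractKey p ≤ sumFractKey q ↔
      p.1 + p.2 ≤ q.1 + q.2 ∧ (p.1 + p.2 = q.1 + q.2 → fract (2 * p.1) ≤ fract (2 * q.1)) :=
  Prod.Lex.toLex_le_toLex'

lemma sum_eq_of_mod_one_midpoint {x y z : ℝ × ℝ} (hx : x ∈ T) (hy : y ∈ T) (hz : z ∈ T)
    {k₁ k₂ : ℤ} (h₁ : 2 * y.1 - (x.1 + z.1) = k₁) (h₂ : 2 * y.2 - (x.2 + z.2) = k₂)
    (hsx : y.1 + y.2 ≤ x.1 + x.2) (hsz : y.1 + y.2 ≤ z.1 + z.2) :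
    x.1 + x.2 = y.1 + y.2 ∧ z.1 + z.2 = y.1 + y.2 := by
  have hk : ((k₁ + k₂ : ℤ) : ℝ) = 2 * (y.1 + y.2) - (x.1 + x.2) - (z.1 + z.2) := by
    push_cast
    linarith
  have hk_lo : -2 < k₁ + k₂ := by
    obtain ⟨-, -, -, -, -, hxs⟩ := bounds_of_mem_T hx
    obtain ⟨-, -, -, -, hys, -⟩ := bounds_of_mem_T hy
    obtain ⟨-, -, -, -, -, hzs⟩ := bounds_of_mem_T hz
    exact_mod_cast (by linarith : (-2 : ℝ) < ((k₁ + k₂ : ℤ) : ℝ))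
  have hk_hi : k₁ + k₂ ≤ 0 := by exact_mod_cast (by linarith : ((k₁ + k₂ : ℤ) : ℝ) ≤ 0)
  have hk0 : k₁ + k₂ = 0 := by
    have := sum_ne_neg_one_of_mem_T hx hy hz h₁ h₂
    omega
  rw [hk0, Int.cast_zero] at hk
  constructor <;> linarith

lemma not_mod1Eq_two_smul_of_sumFractKey_le {x y z : ℝ × ℝ} (hx : x ∈ T) (hy : y ∈ T)
    (hz : z ∈ T) (hne : x ≠ z) (hyx : sumFractKey y ≤ sumFractKey x)
    (hyz : sumFractKey y ≤ sumFractKey z) : ¬ Mod1Eq (2 • y) (x + z) := by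
  rintro ⟨⟨k₁, h₁⟩, ⟨k₂, h₂⟩⟩
  rw [Prod.smul_fst, Prod.fst_add, two_nsmul, ← two_mul] at h₁
  rw [Prod.smul_snd, Prod.snd_add, two_nsmul, ← two_mul] at h₂
  obtain ⟨hsx, hfx⟩ := sumFractKey_le_iff.1 hyx
  obtain ⟨hsz, hfz⟩ := sumFractKey_le_iff.1 hyz
  obtain ⟨hsx', hsz'⟩ := sum_eq_of_mod_one_midpoint hx hy hz h₁ h₂ hsx hsz
  obtain ⟨hx₀, hx₁, -⟩ := bounds_of_mem_T hx
  obtain ⟨hz₀, hz₁, -⟩ := bounds_of_mem_T hz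
  have hxz : x.1 = z.1 := by
    rcases le_total x.1 z.1 with hle | hle
    · exact eq_of_fract_two_mul_le hx₀ hle hz₁ h₁ (hfx hsx'.symm) (hfz hsz'.symm)
        (fun h h' => fst_add_fst_lt_one_of_mem_T hx hz h h' (by linarith))
    · exact (eq_of_fract_two_mul_le hz₀ hle hx₁ (by rwa [add_comm]) (hfz hsz'.symm)
        (hfx hsx'.symm) (fun h h' => fst_add_fst_lt_one_of_mem_T hz hx h h' (by linarith))).symm
  exact hne (Prod.ext hxz (by linarith))

/-- For every non-empty finite subset S ⊆ T, there exists a point y ∈ S that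
is a non-mid-point of S with respect to the mod 1 relation, i.e., there is no solution to
2y ≡ x + z (mod 1) with distinct x, z ∈ S. -/
theorem stmt5 (S : Finset (ℝ × ℝ)) (hS : S.Nonempty) (hST : ↑S ⊆ T) :
    ∃ y ∈ S, ¬ ∃ x ∈ S, ∃ z ∈ S, x ≠ z ∧ Mod1Eq (2 • y) (x + z) := by
  obtain ⟨y, hyS, hmin⟩ := S.exists_min_image sumFractKey hS
  refine ⟨y, hyS, ?_⟩
  rintro ⟨x, hxS, z, hzS, hne, hmid⟩
  exact not_mod1Eq_two_smul_of_sumFractKey_le (hST hxS) (hST hyS) (hST hzS) hne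
    (hmin x hxS) (hmin z hzS) hmid
end

section
/- Let m be a positive integer, α, β ∈ ℝ, and S ⊆ (ℤ/mℤ)². Then a point y ∈ S is a non-mid-point of S (in (ℤ/mℤ)²) if and only if its image φ_{α,β}(y) is a non-mid-point of the image φ_{α,β}(S) (with respect to the mod 1 relation in [0,1)²). -/
/-- The map φ_{α,β} : (ℤ/mℤ)² → [0,1)², sending (q,r) (with q,r ∈ {0,...,m-1} the
canonical representatives) to (frac(α + q/m), frac(β + r/m)). -/
noncomputable def phi (m : ℕ) (α β : ℝ) (x : ZMod m × ZMod m) : ℝ × ℝ :=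
  (Int.fract (α + (x.1.val : ℝ) / m), Int.fract (β + (x.2.val : ℝ) / m))

/-!
Reduced mod 1, each coordinate of `phi m α β` is a translate of the embedding
`ZMod.toAddCircle : ZMod m →+ ℝ/ℤ`, `a ↦ a / m`. An injective additive map followed by a
translation preserves and reflects the relation `2 • y = x + z`, and is injective, so the
mid-points of `S` and of its image correspond.
-/

lemma exists_intCast_sub_eq_iff (x y : ℝ) :
    (∃ k : ℤ, x - y = k) ↔ (x : UnitAddCircle) = y := by
  rw [← sub_eq_zero, ← AddCircle.coe_sub, AddCircle.coe_eq_zero_iff]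
  simp only [zsmul_one, eq_comm]

lemma mod1Eq_iff (u v : ℝ × ℝ) :
    Mod1Eq u v ↔ (u.1 : UnitAddCircle) = v.1 ∧ (u.2 : UnitAddCircle) = v.2 := by
  rw [Mod1Eq, exists_intCast_sub_eq_iff, exists_intCast_sub_eq_iff]

lemma two_nsmul_add_eq_add_add_iff {G H : Type*} [AddCommGroup G] [AddCommGroup H]
    {f : G →+ H} (hf : Function.Injective f) (t : H) (a b c : G) :
    2 • (t + f a) = (t + f b) + (t + f c) ↔ 2 • a = b + c := by
  have h : 2 • (t + f a) - ((t + f b) + (t + f c)) = f (2 • a - (b + c)) := by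
    simp only [map_sub, map_add, map_nsmul]
    abel
  rw [← sub_eq_zero, h, map_eq_zero_iff f hf, sub_eq_zero]

section

variable {m : ℕ} [NeZero m]

lemma coe_fract_add_val_div (γ : ℝ) (a : ZMod m) :
    ((Int.fract (γ + a.val / m) : ℝ) : UnitAddCircle) = γ + ZMod.toAddCircle a := by
  rw [AddCircle.coe_fract, AddCircle.coe_add, ZMod.toAddCircle_apply]

lemma phi_injective (α β : ℝ) : Function.Injective (phi m α β) := by
  intro x z h
  have h1 := congrArg (fun u : ℝ × ℝ ↦ (u.1 : UnitAddCircle)) h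
  have h2 := congrArg (fun u : ℝ × ℝ ↦ (u.2 : UnitAddCircle)) h
  simp only [phi, coe_fract_add_val_div, add_right_inj, ZMod.toAddCircle_inj] at h1 h2
  exact Prod.ext h1 h2

lemma mod1Eq_two_nsmul_phi_iff (α β : ℝ) (x y z : ZMod m × ZMod m) :
    Mod1Eq (2 • phi m α β y) (phi m α β x + phi m α β z) ↔ 2 • y = x + z := by
  simp only [mod1Eq_iff, Prod.ext_iff, Prod.smul_fst, Prod.smul_snd, Prod.fst_add,
    Prod.snd_add, AddCircle.coe_nsmul, AddCircle.coe_add, phi, coe_fract_add_val_div,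
    two_nsmul_add_eq_add_add_iff (ZMod.toAddCircle_injective m)]

end

theorem stmt7_general (m : ℕ) (hm : 0 < m) (α β : ℝ) (S : Set (ZMod m × ZMod m))
    (y : ZMod m × ZMod m) :
    (¬ ∃ x ∈ S, ∃ z ∈ S, x ≠ z ∧ 2 • y = x + z) ↔
      (¬ ∃ u ∈ phi m α β '' S, ∃ v ∈ phi m α β '' S,
          u ≠ v ∧ Mod1Eq (2 • phi m α β y) (u + v)) := by
  have : NeZero m := ⟨hm.ne'⟩
  simp only [Set.exists_mem_image, (phi_injective α β).ne_iff, mod1Eq_two_nsmul_phi_iff]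

/-- Let m be a positive integer, α, β ∈ ℝ, and S ⊆ (ℤ/mℤ)². Then a point
y ∈ S is a non-mid-point of S (i.e., there is no solution to 2y = x + z with distinct
x, z ∈ S) if and only if φ_{α,β}(y) is a non-mid-point of the image φ_{α,β}(S) with
respect to the mod 1 relation (i.e., there is no solution to
2·φ_{α,β}(y) ≡ u + v (mod 1) with distinct u, v ∈ φ_{α,β}(S)). -/
theorem stmt7 (m : ℕ) (hm : 0 < m) (α β : ℝ) (S : Set (ZMod m × ZMod m))
    (y : ZMod m × ZMod m) (hy : y ∈ S) :
    (¬ ∃ x ∈ S, ∃ z ∈ S, x ≠ z ∧ 2 • y = x + z) ↔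
      (¬ ∃ u ∈ phi m α β '' S, ∃ v ∈ phi m α β '' S,
          u ≠ v ∧ Mod1Eq (2 • phi m α β y) (u + v)) :=
  stmt7_general m hm α β S y
end

section
/- The two-dimensional Lebesgue measure (area) of the set T ⊆ ℝ² equals 7/24. -/
/-! By Fubini, the area of `T` is the integral of the lengths of its vertical sections. Cutting
`[0, 3/4)` at `1/12, 1/3, 1/2, 7/12, 2/3`, on each piece the section over `x` is an interval (up to
its endpoints) whose length is affine in `x`, so `T` splits into six trapezoids of areas
`11/288, 1/8, 1/12, 1/48, 5/288, 1/144`, which add up to `7/24`. -/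

open MeasureTheory Set

lemma volume_inter_fst_preimage_Ico {s : Set (ℝ × ℝ)} (hs : MeasurableSet s) {a b : ℝ}
    (hab : a ≤ b) {f : ℝ → ℝ} (hf : Continuous f) (hf_nonneg : ∀ x ∈ Ico a b, 0 ≤ f x)
    (hfiber : ∀ x ∈ Ico a b, volume (Prod.mk x ⁻¹' s) = ENNReal.ofReal (f x)) :
    volume (s ∩ Prod.fst ⁻¹' Ico a b) = ENNReal.ofReal (∫ x in a..b, f x) := by
  have hint : IntegrableOn f (Ico a b) := hf.integrableOn_Icc.mono_set Ico_subset_Icc_self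
  calc volume (s ∩ Prod.fst ⁻¹' Ico a b)
      = (volume.restrict (Ico a b)).prod volume s := by
        rw [Measure.restrict_prod_eq_prod_univ, Measure.volume_eq_prod,
          Measure.restrict_apply hs, prod_univ]
    _ = ∫⁻ x in Ico a b, ENNReal.ofReal (f x) := by
        rw [Measure.prod_apply hs]; exact setLIntegral_congr_fun measurableSet_Ico hfiber
    _ = ENNReal.ofReal (∫ x in a..b, f x) := by
        rw [intervalIntegral.integral_of_le hab, ← integral_Ico_eq_integral_Ioc,
          ofReal_integral_eq_lintegral_ofReal hint
            ((ae_restrict_iff' measurableSet_Ico).2 (.of_forall hf_nonneg))]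

lemma integral_const_add_mul_id (a b c d : ℝ) :
    (∫ x in a..b, (c + d * x)) = c * (b - a) + d * (b ^ 2 - a ^ 2) / 2 := by
  rw [intervalIntegral.integral_add intervalIntegrable_const
      (intervalIntegral.intervalIntegrable_id.const_mul d),
    intervalIntegral.integral_const, intervalIntegral.integral_const_mul, integral_id, smul_eq_mul]
  ring

lemma Real.volume_eq_of_Ioo_subset_of_subset_Icc {s : Set ℝ} {a b : ℝ} (h₁ : Ioo a b ⊆ s)
    (h₂ : s ⊆ Icc a b) : volume s = ENNReal.ofReal (b - a) :=
  le_antisymm (Real.volume_Icc ▸ measure_mono h₂) (Real.volume_Ioo ▸ measure_mono h₁)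

lemma volume_inter_fst_preimage_Ico_of_affine_fibers {s : Set (ℝ × ℝ)} (hs : MeasurableSet s)
    {a b c d : ℝ} (hab : a ≤ b) (l : ℝ → ℝ) (hnonneg : ∀ x ∈ Ico a b, 0 ≤ c + d * x)
    (hfiber : ∀ x ∈ Ico a b, Ioo (l x) (l x + (c + d * x)) ⊆ Prod.mk x ⁻¹' s ∧
      Prod.mk x ⁻¹' s ⊆ Icc (l x) (l x + (c + d * x))) :
    volume (s ∩ Prod.fst ⁻¹' Ico a b) = ENNReal.ofReal (c * (b - a) + d * (b ^ 2 - a ^ 2) / 2) := by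
  rw [← integral_const_add_mul_id]
  refine volume_inter_fst_preimage_Ico hs hab (by fun_prop) hnonneg fun x hx => ?_
  rw [Real.volume_eq_of_Ioo_subset_of_subset_Icc (hfiber x hx).1 (hfiber x hx).2, add_sub_cancel_left]

lemma volume_inter_fst_preimage_Ico_add {s : Set (ℝ × ℝ)} (hs : MeasurableSet s) {a b c : ℝ}
    (hab : a ≤ b) (hbc : b ≤ c) :
    volume (s ∩ Prod.fst ⁻¹' Ico a c) =
      volume (s ∩ Prod.fst ⁻¹' Ico a b) + volume (s ∩ Prod.fst ⁻¹' Ico b c) := by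
  rw [← Ico_union_Ico_eq_Ico hab hbc, preimage_union, inter_union_distrib_left,
    measure_union ((Ico_disjoint_Ico_same.preimage _).mono inter_subset_right inter_subset_right)
      (hs.inter (measurable_fst measurableSet_Ico))]

lemma measurableSet_T : MeasurableSet T := by
  simp only [T, T1, T2, ofPred_and, mem_Ico]
  repeat' apply_rules [MeasurableSet.union, MeasurableSet.inter, measurableSet_le, measurableSet_lt]
  all_goals fun_prop

lemma T_subset_fst_preimage_Ico : T ⊆ Prod.fst ⁻¹' Ico 0 (3/4) := by
  intro p hp
  simp only [T, T1, T2, mem_union, mem_ofPred_eq, mem_Ico, mem_preimage] at hp ⊢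
  grind

lemma mem_fiber_T {x y : ℝ} : y ∈ Prod.mk x ⁻¹' T ↔
    (0 ≤ x ∧ x < 1/2 ∧ 1/2 ≤ y ∧ y < 1 ∧ 7/12 ≤ x + y ∧ x + y ≤ 4/3) ∨
    (0 ≤ x ∧ x < 1/2 ∧ 0 ≤ y ∧ y < 1/2 ∧ 5/6 < x + y) ∨
    (1/2 ≤ x ∧ x < 1 ∧ 0 ≤ y ∧ y < 1/2 ∧ 7/12 ≤ x + y ∧ x + y < 5/6 ∧ 2 * x + y < 3/2) := by
  simp only [T, T1, T2, mem_preimage, mem_union, mem_ofPred_eq, mem_Ico, and_assoc, or_assoc]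

lemma volume_T_slab_zero_twelfth :
    volume (T ∩ Prod.fst ⁻¹' Ico 0 (1/12)) = ENNReal.ofReal (11/288) := by
  rw [volume_inter_fst_preimage_Ico_of_affine_fibers measurableSet_T (c := 5/12) (d := 1)
    (by norm_num) (fun x => 7/12 - x)]
  · norm_num
  · intro x ⟨h₀, h₁⟩; linarith
  · intro x ⟨h₀, h₁⟩
    constructor <;> intro y hy <;> simp only [mem_fiber_T, mem_Ioo, mem_Icc] at hy ⊢ <;> grind

lemma volume_T_slab_twelfth_third :
    volume (T ∩ Prod.fst ⁻¹' Ico (1/12) (1/3)) = ENNReal.ofReal (1/8) := by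
  rw [volume_inter_fst_preimage_Ico_of_affine_fibers measurableSet_T (c := 1/2) (d := 0)
    (by norm_num) (fun _ => 1/2)]
  · norm_num
  · intro x ⟨h₀, h₁⟩; linarith
  · intro x ⟨h₀, h₁⟩
    constructor <;> intro y hy <;> simp only [mem_fiber_T, mem_Ioo, mem_Icc] at hy ⊢ <;> grind

lemma volume_T_slab_third_half :
    volume (T ∩ Prod.fst ⁻¹' Ico (1/3) (1/2)) = ENNReal.ofReal (1/12) := by
  rw [volume_inter_fst_preimage_Ico_of_affine_fibers measurableSet_T (c := 1/2) (d := 0)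
    (by norm_num) (fun x => 5/6 - x)]
  · norm_num
  · intro x ⟨h₀, h₁⟩; linarith
  · intro x ⟨h₀, h₁⟩
    constructor <;> intro y hy <;> simp only [mem_fiber_T, mem_Ioo, mem_Icc] at hy ⊢ <;> grind

lemma volume_T_slab_half_sevenTwelfths :
    volume (T ∩ Prod.fst ⁻¹' Ico (1/2) (7/12)) = ENNReal.ofReal (1/48) := by
  rw [volume_inter_fst_preimage_Ico_of_affine_fibers measurableSet_T (c := 1/4) (d := 0)
    (by norm_num) (fun x => 7/12 - x)]
  · norm_num
  · intro x ⟨h₀, h₁⟩; linarith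
  · intro x ⟨h₀, h₁⟩
    constructor <;> intro y hy <;> simp only [mem_fiber_T, mem_Ioo, mem_Icc] at hy ⊢ <;> grind

lemma volume_T_slab_sevenTwelfths_twoThirds :
    volume (T ∩ Prod.fst ⁻¹' Ico (7/12) (2/3)) = ENNReal.ofReal (5/288) := by
  rw [volume_inter_fst_preimage_Ico_of_affine_fibers measurableSet_T (c := 5/6) (d := -1)
    (by norm_num) (fun _ => 0)]
  · norm_num
  · intro x ⟨h₀, h₁⟩; linarith
  · intro x ⟨h₀, h₁⟩
    constructor <;> intro y hy <;> simp only [mem_fiber_T, mem_Ioo, mem_Icc] at hy ⊢ <;> grind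

lemma volume_T_slab_twoThirds_threeQuarters :
    volume (T ∩ Prod.fst ⁻¹' Ico (2/3) (3/4)) = ENNReal.ofReal (1/144) := by
  rw [volume_inter_fst_preimage_Ico_of_affine_fibers measurableSet_T (c := 3/2) (d := -2)
    (by norm_num) (fun _ => 0)]
  · norm_num
  · intro x ⟨h₀, h₁⟩; linarith
  · intro x ⟨h₀, h₁⟩
    constructor <;> intro y hy <;> simp only [mem_fiber_T, mem_Ioo, mem_Icc] at hy ⊢ <;> grind

/-- The two-dimensional Lebesgue measure (area) of T equals 7/24. -/
theorem stmt10 : MeasureTheory.volume T = 7/24 := by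
  rw [← inter_eq_left.2 T_subset_fst_preimage_Ico,
    volume_inter_fst_preimage_Ico_add measurableSet_T (b := 1/12),
    volume_inter_fst_preimage_Ico_add measurableSet_T (a := 1/12) (b := 1/3),
    volume_inter_fst_preimage_Ico_add measurableSet_T (a := 1/3) (b := 1/2),
    volume_inter_fst_preimage_Ico_add measurableSet_T (a := 1/2) (b := 7/12),
    volume_inter_fst_preimage_Ico_add measurableSet_T (a := 7/12) (b := 2/3),
    volume_T_slab_zero_twelfth, volume_T_slab_twelfth_third, volume_T_slab_third_half,
    volume_T_slab_half_sevenTwelfths, volume_T_slab_sevenTwelfths_twoThirds,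
    volume_T_slab_twoThirds_threeQuarters]
  iterate 5 rw [← ENNReal.ofReal_add (by norm_num) (by positivity)]
  all_goals norm_num [ENNReal.ofReal_div_of_pos]
end

section
/- Let x = (a_x, b_x), y = (a_y, b_y), z = (a_z, b_z) be points of T such that 2y ≡ x + z (mod 1). Then a_y + b_y ≥ (a_x + b_x)/2 + (a_z + b_z)/2. -/
/-!
Write `2y = x + z + (k₁, k₂)` with `k₁, k₂ ∈ ℤ`; since all coordinates lie in `[0, 1)`, each
`kᵢ ∈ {-1, 0, 1}`, and the claim is `k₁ + k₂ ≥ 0`. The three cases with a negative sum are ruled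
out by three features of `T`: coordinate sums lie in `[7/12, 4/3]`, a point with coordinate sum
at least `5/6` has `a < 1/2`, and a point with `b < 1/2` has `a + b > 5/6` or `a ≥ 1/2`.
-/

lemma mem_Icc_of_two_mul_sub_add_eq_int {u v w : ℝ} {k : ℤ} (hu : u ∈ Set.Ico (0 : ℝ) 1)
    (hv : v ∈ Set.Ico (0 : ℝ) 1) (hw : w ∈ Set.Ico (0 : ℝ) 1) (h : 2 * v - (u + w) = k) :
    k ∈ Set.Icc (-1) 1 := by
  obtain ⟨hu₀, hu₁⟩ := hu
  obtain ⟨hv₀, hv₁⟩ := hv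
  obtain ⟨hw₀, hw₁⟩ := hw
  have hlo : (-2 : ℤ) < k := by exact_mod_cast (show (-2 : ℝ) < k by linarith)
  have hhi : k < 2 := by exact_mod_cast (show (k : ℝ) < 2 by linarith)
  exact ⟨by omega, by omega⟩

namespace T

variable {a b : ℝ}

lemma mem_iff :
    (a, b) ∈ T ↔
      (0 ≤ a ∧ a < 1/2 ∧ 1/2 ≤ b ∧ b < 1 ∧ 7/12 ≤ a + b ∧ a + b ≤ 4/3) ∨
      (0 ≤ a ∧ a < 1/2 ∧ 0 ≤ b ∧ b < 1/2 ∧ 5/6 < a + b) ∨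
      (1/2 ≤ a ∧ a < 1 ∧ 0 ≤ b ∧ b < 1/2 ∧ 7/12 ≤ a + b ∧ a + b < 5/6 ∧ 2 * a + b < 3/2) := by
  simp only [T, T1, T2, Set.mem_union, Set.mem_ofPred_eq, Set.mem_Ico, and_assoc, or_assoc]

lemma fst_mem_Ico (h : (a, b) ∈ T) : a ∈ Set.Ico (0 : ℝ) 1 := by
  rcases mem_iff.1 h with ⟨_, _, _⟩ | ⟨_, _, _⟩ | ⟨_, _, _⟩ <;> constructor <;> linarith

lemma snd_mem_Ico (h : (a, b) ∈ T) : b ∈ Set.Ico (0 : ℝ) 1 := by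
  rcases mem_iff.1 h with ⟨_, _, _, _⟩ | ⟨_, _, _, _⟩ | ⟨_, _, _, _⟩ <;> constructor <;> linarith

lemma seven_twelfths_le_add (h : (a, b) ∈ T) : 7/12 ≤ a + b := by
  rcases mem_iff.1 h with ⟨_, _, _, _, _⟩ | ⟨_, _, _, _, _⟩ | ⟨_, _, _, _, _⟩ <;> linarith

lemma add_le_four_thirds (h : (a, b) ∈ T) : a + b ≤ 4/3 := by
  rcases mem_iff.1 h with ⟨_, _, _, _, _, _⟩ | ⟨_, _, _, _, _⟩ | ⟨_, _, _, _, _, _⟩ <;> linarith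

lemma fst_lt_half_of_five_sixths_le_add (h : (a, b) ∈ T) (hs : 5/6 ≤ a + b) : a < 1/2 := by
  rcases mem_iff.1 h with ⟨_, _⟩ | ⟨_, _⟩ | ⟨_, _, _, _, _, _⟩ <;> linarith

lemma five_sixths_lt_add_or_half_le_fst_of_snd_lt_half (h : (a, b) ∈ T) (hb : b < 1/2) :
    5/6 < a + b ∨ 1/2 ≤ a := by
  rcases mem_iff.1 h with ⟨_, _, _⟩ | ⟨_, _, _, _, hs⟩ | ⟨ha, _⟩
  · linarith
  · exact Or.inl hs
  · exact Or.inr ha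

end T

section

variable {ax bx ay by' az bz : ℝ}

lemma fst_add_fst_lt_one_of_le_add (hx : (ax, bx) ∈ T) (hz : (az, bz) ∈ T)
    (hs : 13/6 ≤ (ax + bx) + (az + bz)) : ax + az < 1 := by
  have hx' := T.fst_lt_half_of_five_sixths_le_add hx (by linarith [T.add_le_four_thirds hz])
  have hz' := T.fst_lt_half_of_five_sixths_le_add hz (by linarith [T.add_le_four_thirds hx])
  linarith

lemma carry_add_carry_nonneg {k₁ k₂ : ℤ}
    (hx : (ax, bx) ∈ T) (hy : (ay, by') ∈ T) (hz : (az, bz) ∈ T)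
    (h₁ : 2 * ay - (ax + az) = k₁) (h₂ : 2 * by' - (bx + bz) = k₂) : 0 ≤ k₁ + k₂ := by
  obtain ⟨hk₁lo, hk₁hi⟩ := mem_Icc_of_two_mul_sub_add_eq_int (T.fst_mem_Ico hx)
    (T.fst_mem_Ico hy) (T.fst_mem_Ico hz) h₁
  obtain ⟨hk₂lo, hk₂hi⟩ := mem_Icc_of_two_mul_sub_add_eq_int (T.snd_mem_Ico hx)
    (T.snd_mem_Ico hy) (T.snd_mem_Ico hz) h₂
  have hsx := T.add_le_four_thirds hx
  have hsy := T.seven_twelfths_le_add hy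
  have hsz := T.add_le_four_thirds hz
  have hay := (T.fst_mem_Ico hy).1
  interval_cases k₁ <;> interval_cases k₂ <;> norm_num at h₁ h₂ ⊢
  · -- (k₁, k₂) = (-1, -1)
    linarith
  · -- (k₁, k₂) = (-1, 0)
    linarith [fst_add_fst_lt_one_of_le_add hx hz (by linarith)]
  · -- (k₁, k₂) = (0, -1)
    rcases T.five_sixths_lt_add_or_half_le_fst_of_snd_lt_half hy
      (by linarith [(T.snd_mem_Ico hx).2, (T.snd_mem_Ico hz).2]) with hs | ha
    · linarith
    · linarith [fst_add_fst_lt_one_of_le_add hx hz (by linarith)]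

end

/-- Let x = (a_x, b_x), y = (a_y, b_y), z = (a_z, b_z) be points of T such
that 2y ≡ x + z (mod 1). Then a_y + b_y ≥ (a_x + b_x)/2 + (a_z + b_z)/2. -/
theorem stmt14 (ax bx ay by' az bz : ℝ)
    (hx : (ax, bx) ∈ T) (hy : (ay, by') ∈ T) (hz : (az, bz) ∈ T)
    (hAP : Mod1Eq (2 • ((ay, by') : ℝ × ℝ)) ((ax, bx) + (az, bz))) :
    ay + by' ≥ (ax + bx) / 2 + (az + bz) / 2 := by
  obtain ⟨⟨k₁, h₁⟩, ⟨k₂, h₂⟩⟩ := hAP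
  simp only [Prod.smul_mk, Prod.mk_add_mk, nsmul_eq_mul, Nat.cast_ofNat] at h₁ h₂
  have hk : (0 : ℝ) ≤ k₁ + k₂ := by exact_mod_cast carry_add_carry_nonneg hx hy hz h₁ h₂
  linarith
end

section
/- Let x = (a_x, b_x), y = (a_y, b_y), z = (a_z, b_z) be points of T such that 2y ≡ x + z (mod 1) and a_x + b_x = a_z + b_z. Then g(a_y) ≥ (g(a_x) + g(a_z))/2; moreover, if g(a_x) = g(a_y) = g(a_z), then x = z. -/
/-- The function g : [0,1) → [0,1/2), with g(t) = t for t ∈ [0,1/2) and g(t) = t - 1/2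
for t ∈ [1/2,1). -/
noncomputable def g (t : ℝ) : ℝ := if t < 1/2 then t else t - 1/2

open Set

noncomputable def halfIndex (t : ℝ) : ℤ := if t < 1/2 then 0 else 1

lemma halfIndex_eq_zero_or_one (t : ℝ) : halfIndex t = 0 ∨ halfIndex t = 1 := by
  unfold halfIndex; split_ifs <;> simp

lemma g_eq_sub_halfIndex (t : ℝ) : g t = t - halfIndex t / 2 := by
  unfold g halfIndex; split_ifs <;> push_cast <;> ring

lemma g_nonneg {t : ℝ} (ht : 0 ≤ t) : 0 ≤ g t := by
  unfold g; split_ifs <;> linarith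

lemma g_lt_half {t : ℝ} (ht : t < 1) : g t < 1/2 := by
  unfold g; split_ifs <;> linarith

lemma two_mul_two_mul_g_sub_g_sub_g {a b c : ℝ} {n : ℤ} (h : 2 * b - (a + c) = n) :
    2 * (2 * g b - g a - g c) =
      ((2 * n - 2 * halfIndex b + halfIndex a + halfIndex c : ℤ) : ℝ) := by
  simp only [g_eq_sub_halfIndex]
  push_cast
  linarith

theorem g_add_g_le_two_mul_g {a b c : ℝ} {n : ℤ} (ha : a < 1) (hb : 0 ≤ b) (hc : c < 1)
    (h : 2 * b - (a + c) = n) (hmix : halfIndex a ≠ halfIndex c → a + c < 1) :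
    g a + g c ≤ 2 * g b := by
  have hNg := two_mul_two_mul_g_sub_g_sub_g h
  generalize hN : 2 * n - 2 * halfIndex b + halfIndex a + halfIndex c = N at hNg
  have hN_gt : -2 < N := by
    have : (-2 : ℝ) < N := by
      rw [← hNg]; linarith [g_lt_half ha, g_lt_half hc, g_nonneg hb]
    exact_mod_cast this
  have hN_ne : N ≠ -1 := by
    intro hN1
    have hεa := halfIndex_eq_zero_or_one a
    have hεc := halfIndex_eq_zero_or_one c
    have hε_sum : (halfIndex a + halfIndex c : ℝ) = 1 := by exact_mod_cast (by omega)
    have hlt := hmix (by omega)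
    rw [hN1, g_eq_sub_halfIndex a, g_eq_sub_halfIndex c] at hNg
    push_cast at hNg
    linarith [g_nonneg hb]
  have hN_nonneg : (0 : ℝ) ≤ N := by exact_mod_cast (by omega : 0 ≤ N)
  linarith

theorem eq_of_g_eq_of_g_eq {a b c : ℝ} {n : ℤ} (h : 2 * b - (a + c) = n)
    (hab : g a = g b) (hbc : g b = g c) : a = c := by
  have hN : ((2 * n - 2 * halfIndex b + halfIndex a + halfIndex c : ℤ) : ℝ) = (0 : ℤ) := by
    rw [← two_mul_two_mul_g_sub_g_sub_g h, hab, ← hbc]; push_cast; ring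
  replace hN := Int.cast_injective hN
  have hε : halfIndex a = halfIndex c := by
    rcases halfIndex_eq_zero_or_one a with hεa | hεa <;>
      rcases halfIndex_eq_zero_or_one c with hεc | hεc <;> omega
  have := g_eq_sub_halfIndex a
  have := g_eq_sub_halfIndex c
  rw [hε] at *
  linarith

lemma fst_mem_Ico_of_mem_T {p : ℝ × ℝ} (hp : p ∈ T) : p.1 ∈ Ico 0 1 := by
  simp only [T, T1, T2, mem_union, mem_ofPred_eq, mem_Ico] at hp
  rcases hp with (hp | hp) | hp <;> exact ⟨by linarith, by linarith⟩

lemma fst_add_fst_lt_one_of_lt_half_le {p q : ℝ × ℝ} (hp : p ∈ T) (hq : q ∈ T)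
    (hs : p.1 + p.2 = q.1 + q.2) (hp1 : p.1 < 1/2) (hq1 : 1/2 ≤ q.1) : p.1 + q.1 < 1 := by
  simp only [T, T1, T2, mem_union, mem_ofPred_eq, mem_Ico] at hp hq
  have hqT2 : q.1 + q.2 < 5/6 ∧ 2 * q.1 + q.2 < 3/2 := by
    rcases hq with (hq | hq) | hq
    · linarith [hq.1.2]
    · linarith [hq.1.2]
    · exact hq.2.2.2
  have hp2 : 1/2 ≤ p.2 := by
    rcases hp with (hp | hp) | hp
    · exact hp.2.1.1
    · linarith [hp.2.2]
    · linarith [hp.1.1]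
  linarith

lemma fst_add_fst_lt_one_of_halfIndex_ne {p q : ℝ × ℝ} (hp : p ∈ T) (hq : q ∈ T)
    (hs : p.1 + p.2 = q.1 + q.2) (hpq : halfIndex p.1 ≠ halfIndex q.1) : p.1 + q.1 < 1 := by
  rcases lt_or_ge p.1 (1/2) with hp1 | hp1 <;> rcases lt_or_ge q.1 (1/2) with hq1 | hq1
  · exact absurd (by rw [halfIndex, halfIndex, if_pos hp1, if_pos hq1]) hpq
  · exact fst_add_fst_lt_one_of_lt_half_le hp hq hs hp1 hq1
  · linarith [fst_add_fst_lt_one_of_lt_half_le hq hp hs.symm hq1 hp1]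
  · exact absurd (by rw [halfIndex, halfIndex, if_neg (not_lt.2 hp1), if_neg (not_lt.2 hq1)]) hpq

/-- Let x = (a_x, b_x), y = (a_y, b_y), z = (a_z, b_z) be points of T such
that 2y ≡ x + z (mod 1) and a_x + b_x = a_z + b_z. Then g(a_y) ≥ (g(a_x) + g(a_z))/2;
moreover, if g(a_x) = g(a_y) = g(a_z), then x = z. -/
theorem stmt15 (ax bx ay by' az bz : ℝ)
    (hx : (ax, bx) ∈ T) (hy : (ay, by') ∈ T) (hz : (az, bz) ∈ T)
    (hAP : Mod1Eq (2 • ((ay, by') : ℝ × ℝ)) ((ax, bx) + (az, bz)))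
    (hsum : ax + bx = az + bz) :
    g ay ≥ (g ax + g az) / 2 ∧
    (g ax = g ay ∧ g ay = g az → (ax, bx) = (az, bz)) := by
  obtain ⟨⟨n, hn⟩, -⟩ := hAP
  have hn : 2 * ay - (ax + az) = n := by rw [two_mul]; simpa [two_smul] using hn
  have hmix := fst_add_fst_lt_one_of_halfIndex_ne hx hz hsum
  refine ⟨?_, fun ⟨hxy, hyz⟩ => ?_⟩
  · have := g_add_g_le_two_mul_g (fst_mem_Ico_of_mem_T hx).2 (fst_mem_Ico_of_mem_T hy).1
      (fst_mem_Ico_of_mem_T hz).2 hn hmix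
    linarith
  · have hxz := eq_of_g_eq_of_g_eq hn hxy hyz
    rw [hxz] at hsum ⊢
    rw [add_left_cancel hsum]
end
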